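/- If additionally F preserves adjoints (F(f*) = F(f)* for all linear maps f between inner product spaces), then each coefficient u_n(V) in the expansion F(λ·id_V) = Σ u_n(V) λ^n is a self-adjoint (orthogonal) projection. -/

import Mathlib

/-!
Write `P(λ) = ∑ₙ λⁿ uₙ`. Over an infinite field a polynomial identity in `λ` can be compared
coefficientwise. Comparing coefficients of `μ` in `P(λ) P(μ) = P(λμ)` gives `P(λ) uⱼ = λʲ uⱼ`,
and then comparing coefficients of `λ` gives `uᵢ uⱼ = δᵢⱼ uⱼ`. Likewise, substituting `conj λ`
in `P(λ)* = P(conj λ)` gives `∑ₙ λⁿ uₙ* = ∑ₙ λⁿ uₙ`, so `uₙ* = uₙ`.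
-/

open Finset

section CoefficientComparison

variable {K : Type*} [Field K] [Infinite K]

theorem eq_zero_of_forall_sum_range_pow_mul_eq_zero {N : ℕ} {c : ℕ → K}
    (h : ∀ x : K, ∑ n ∈ range N, x ^ n * c n = 0) {n : ℕ} (hn : n < N) : c n = 0 := by
  have hp : (∑ k ∈ range N, Polynomial.monomial k (c k)) = 0 := Polynomial.funext fun x => by
    simpa [Polynomial.eval_finsetSum, mul_comm] using h x
  simpa [Polynomial.finsetSum_coeff, Polynomial.coeff_monomial, hn] using
    congrArg (Polynomial.coeff · n) hp

theorem eq_of_forall_sum_range_pow_smul_eq {M : Type*} [AddCommGroup M] [Module K M] {N : ℕ}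
    {v w : ℕ → M} (h : ∀ x : K, ∑ n ∈ range N, x ^ n • v n = ∑ n ∈ range N, x ^ n • w n)
    {n : ℕ} (hn : n < N) : v n = w n := by
  rw [← sub_eq_zero, ← Module.forall_dual_apply_eq_zero_iff K]
  intro φ
  refine eq_zero_of_forall_sum_range_pow_mul_eq_zero (c := fun k => φ (v k - w k))
    (fun x => ?_) hn
  simpa [sub_eq_zero, map_sub, mul_sub, sum_sub_distrib, map_sum] using congrArg φ (h x)

theorem mul_eq_ite_of_forall_sum_range_pow_smul_mul {A : Type*} [Ring A] [Algebra K A] {N : ℕ}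
    {v : ℕ → A}
    (hmul : ∀ x y : K, (∑ n ∈ range N, x ^ n • v n) * (∑ n ∈ range N, y ^ n • v n)
      = ∑ n ∈ range N, (x * y) ^ n • v n)
    {i j : ℕ} (hi : i < N) (hj : j < N) : v i * v j = if i = j then v j else 0 := by
  have hcol (x : K) : (∑ n ∈ range N, x ^ n • v n) * v j = x ^ j • v j := by
    refine eq_of_forall_sum_range_pow_smul_eq (v := fun k => (∑ n ∈ range N, x ^ n • v n) * v k)
      (w := fun k => x ^ k • v k) (fun (y : K) => ?_) hj
    simp only [← mul_smul_comm, ← mul_sum, hmul, mul_pow, mul_comm (x ^ _), mul_smul]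
  refine eq_of_forall_sum_range_pow_smul_eq (v := (v · * v j))
    (w := fun k => if k = j then v j else 0) (fun (x : K) => ?_) hi
  simp only [← smul_mul_assoc, ← sum_mul, hcol, smul_ite, smul_zero, sum_ite_eq',
    mem_range, hj, if_true]

theorem star_eq_self_of_forall_star_sum_range_pow_smul [StarRing K] {A : Type*} [AddCommGroup A]
    [Module K A] [StarAddMonoid A] [StarModule K A] {N : ℕ} {v : ℕ → A}
    (hstar : ∀ x : K, star (∑ n ∈ range N, x ^ n • v n) = ∑ n ∈ range N, star x ^ n • v n)
    {n : ℕ} (hn : n < N) : star (v n) = v n :=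
  eq_of_forall_sum_range_pow_smul_eq (fun x => by
    simpa [star_sum, star_smul] using hstar (star x)) hn

end CoefficientComparison

theorem stmt_10_general {M : Type*} [NormedAddCommGroup M] [InnerProductSpace ℂ M]
    [FiniteDimensional ℂ M]
    (N : ℕ) (u : ℕ → M →ₗ[ℂ] M)
    (hzero : ∀ n, N ≤ n → u n = 0)
    (hmul : ∀ l μ : ℂ,
      (∑ n ∈ Finset.range N, l ^ n • u n) ∘ₗ (∑ n ∈ Finset.range N, μ ^ n • u n)
        = ∑ n ∈ Finset.range N, (l * μ) ^ n • u n)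
    (hstar : ∀ l : ℂ, LinearMap.adjoint (∑ n ∈ Finset.range N, l ^ n • u n)
      = ∑ n ∈ Finset.range N, (starRingEnd ℂ l) ^ n • u n) :
    ∀ n, LinearMap.adjoint (u n) = u n ∧ u n ∘ₗ u n = u n := by
  intro n
  rcases lt_or_ge n N with hn | hn
  · refine ⟨star_eq_self_of_forall_star_sum_range_pow_smul hstar hn, ?_⟩
    exact (mul_eq_ite_of_forall_sum_range_pow_smul_mul hmul hn hn).trans (if_pos rfl)
  · simp [hzero n hn]

/-- If additionally `F` preserves adjoints (encoded by `hstar`, from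
`F((λ·id)*) = F(λ·id)*`), then each coefficient `uₙ` of `F(λ·id) = Σ uₙ λⁿ`
is a self-adjoint (orthogonal) projection. -/
theorem stmt_10 {M : Type*} [NormedAddCommGroup M] [InnerProductSpace ℂ M]
    [FiniteDimensional ℂ M]
    (N : ℕ) (u : ℕ → M →ₗ[ℂ] M)
    (hzero : ∀ n, N ≤ n → u n = 0)
    (hmul : ∀ l μ : ℂ,
      (∑ n ∈ Finset.range N, l ^ n • u n) ∘ₗ (∑ n ∈ Finset.range N, μ ^ n • u n)
        = ∑ n ∈ Finset.range N, (l * μ) ^ n • u n)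
    (hone : ∑ n ∈ Finset.range N, u n = LinearMap.id)
    (hstar : ∀ l : ℂ, LinearMap.adjoint (∑ n ∈ Finset.range N, l ^ n • u n)
      = ∑ n ∈ Finset.range N, (starRingEnd ℂ l) ^ n • u n) :
    ∀ n, LinearMap.adjoint (u n) = u n ∧ u n ∘ₗ u n = u n :=
  stmt_10_general N u hzero hmul hstar
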